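/- Let Q : ℝ → ℝ be a ground state, i.e. Q is twice continuously differentiable, positive everywhere, Q(x) → 0 and Q′(x) → 0 as |x| → ∞, and Q satisfies −Q″ + Q − (3/16)Q⁵ = 0 on ℝ. There exists ε₀ > 0 such that: for every continuously differentiable f : ℝ → ℂ with f and f′ square integrable, and every γ ∈ ℝ and y ∈ ℝ satisfying ∫_ℝ |f(x) − e^{−iγ}Q(x − y)|² dx + ∫_ℝ |f′(x) − e^{−iγ}Q′(x − y)|² dx ≤ ε₀², the momentum of f satisfies Im ∫_ℝ conj(f)·f′ dx + (1/4)∫_ℝ |f|⁴ dx ≥ (1/8)∫_ℝ Q(x)⁴ dx. -/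

import Mathlib

/-!
Write `f = e^{-iγ} Q(· - y) + w`. Since the phase has modulus one, `conj f · f'` equals the real
function `Q Q'` plus terms that are linear or quadratic in `(w, w')`, so `|Q'| ≤ Q` bounds its
imaginary part below by `-(Q|w'| + Q|w| + |w||w'|)`. Since `Q ≤ 2`, the pointwise inequality
`|f| ≥ Q - |w|` gives `|f|⁴ ≥ Q⁴ - 16 Q |w|`. After AM-GM, all error terms integrate to
`O(ε (‖Q‖₂² + 1))`, so `P(f) ≥ ¼ ∫ Q⁴ - O(ε)`, which is at least `⅛ ∫ Q⁴` for small `ε`.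

The bounds on `Q` come from the conserved energy `Q'² = Q² - Q⁶/16`. It also yields `Q ∈ L²`:
where `Q ≤ 1` we have `|Q'| > Q/2`, so `(Q²)' = 2QQ'` has a fixed sign near `±∞` and dominates
`Q²` there. The quartic term of `P(f)` is finite by the one-dimensional Sobolev bound
`|f(x)|² ≤ ‖f‖₂² + ‖f'‖₂²`.
-/

open MeasureTheory ComplexConjugate

noncomputable section

/-- `Q` is a ground state: positive, `C²`, vanishing (with its derivative) at infinity,
solving `−Q″ + Q − (3/16)Q⁵ = 0`. -/
structure IsGroundState (Q : ℝ → ℝ) : Prop where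
  smooth : ContDiff ℝ 2 Q
  pos : ∀ x : ℝ, 0 < Q x
  decay : Filter.Tendsto Q (Filter.cocompact ℝ) (nhds 0)
  decay_deriv : Filter.Tendsto (deriv Q) (Filter.cocompact ℝ) (nhds 0)
  eqn : ∀ x : ℝ, - deriv (deriv Q) x + Q x - (3/16) * (Q x) ^ 5 = 0

open Set Filter Topology

lemma mul_le_half_add_div {a b ε : ℝ} (hε : 0 < ε) : a * b ≤ (ε * a ^ 2 + b ^ 2 / ε) / 2 := by
  have : 0 ≤ (ε * a - b) ^ 2 / ε := by positivity
  have h : (ε * a - b) ^ 2 / ε = ε * a ^ 2 + b ^ 2 / ε - 2 * (a * b) := by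
    field_simp; ring
  linarith

lemma pow_four_le_pow_four_add {a b m : ℝ} (ha : 0 ≤ a) (hb : 0 ≤ b) (hm : 0 ≤ m)
    (h : a ≤ b + m) : a ^ 4 ≤ b ^ 4 + 4 * a ^ 3 * m := by
  rcases le_total a b with hab | hba
  · have := pow_le_pow_left₀ ha hab 4
    nlinarith [pow_nonneg ha 3]
  · have hb2 : b ^ 2 ≤ a ^ 2 := pow_le_pow_left₀ hb hba 2
    have hS : a ^ 3 + a ^ 2 * b + a * b ^ 2 + b ^ 3 ≤ 4 * a ^ 3 := by
      nlinarith [pow_le_pow_left₀ hb hba 3, mul_le_mul_of_nonneg_left hba (sq_nonneg a),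
        mul_le_mul_of_nonneg_left hb2 ha]
    calc a ^ 4 = b ^ 4 + (a - b) * (a ^ 3 + a ^ 2 * b + a * b ^ 2 + b ^ 3) := by ring
      _ ≤ b ^ 4 + m * (4 * a ^ 3) := by gcongr; linarith
      _ = b ^ 4 + 4 * a ^ 3 * m := by ring

lemma neg_le_im_conj_mul {c : ℂ} (hc : ‖c‖ = 1) {q q' : ℝ} (hq' : |q'| ≤ q) (z z' : ℂ) :
    -(q * ‖z' - c * q'‖ + q * ‖z - c * q‖ + ‖z - c * q‖ * ‖z' - c * q'‖)
      ≤ (conj z * z').im := by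
  set w := z - c * q
  set W := z' - c * q'
  have hcc : conj c * c = 1 := by
    rw [mul_comm, Complex.mul_conj, Complex.normSq_eq_norm_sq, hc]; norm_num
  have hsplit : conj z * z'
      = ((q * q' : ℝ) : ℂ) + (conj c * q * W + (c * q' * conj w + conj w * W)) := by
    have hz : z = c * q + w := by simp [w]
    have hz' : z' = c * q' + W := by simp [W]
    rw [hz, hz']
    simp only [map_add, map_mul, Complex.conj_ofReal, Complex.ofReal_mul]
    linear_combination ((q : ℂ) * q') * hcc
  have h1 : ‖conj c * q * W‖ = q * ‖W‖ := by
    rw [norm_mul, norm_mul, Complex.norm_conj, hc, Complex.norm_real, Real.norm_eq_abs,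
      abs_of_nonneg ((abs_nonneg q').trans hq'), one_mul]
  have h2 : ‖c * q' * conj w‖ ≤ q * ‖w‖ := by
    rw [norm_mul, norm_mul, Complex.norm_conj, hc, Complex.norm_real, Real.norm_eq_abs, one_mul]
    exact mul_le_mul_of_nonneg_right hq' (norm_nonneg _)
  have h3 : ‖conj w * W‖ = ‖w‖ * ‖W‖ := by rw [norm_mul, Complex.norm_conj]
  rw [hsplit]
  simp only [Complex.add_im, Complex.ofReal_im, zero_add]
  linarith [neg_le_of_abs_le (Complex.abs_im_le_norm (conj c * q * W)),
    neg_le_of_abs_le (Complex.abs_im_le_norm (c * q' * conj w)),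
    neg_le_of_abs_le (Complex.abs_im_le_norm (conj w * W))]

lemma sub_le_im_conj_mul_add_norm_pow_four {c : ℂ} (hc : ‖c‖ = 1) {q q' ε : ℝ} (hq : 0 ≤ q)
    (hq2 : q ≤ 2) (hq' : |q'| ≤ q) (hε : 0 < ε) (hε1 : ε ≤ 1) (z z' : ℂ) :
    q ^ 4 / 4 - 3 * (ε * q ^ 2 + (‖z - c * q‖ ^ 2 + ‖z' - c * q'‖ ^ 2) / ε)
      ≤ (conj z * z').im + ‖z‖ ^ 4 / 4 := by
  have him := neg_le_im_conj_mul hc hq' z z'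
  have hq_le : q ≤ ‖z‖ + ‖z - c * q‖ := by
    have := norm_sub_norm_le (c * q) z
    rw [norm_sub_rev, norm_mul, hc, one_mul, Complex.norm_real, Real.norm_of_nonneg hq] at this
    linarith
  set w := ‖z - c * q‖
  set W := ‖z' - c * q'‖
  have hw0 : 0 ≤ w := norm_nonneg _
  have hW0 : 0 ≤ W := norm_nonneg _
  have hquartic : q ^ 4 ≤ ‖z‖ ^ 4 + 16 * (q * w) := by
    have := pow_four_le_pow_four_add hq (norm_nonneg z) hw0 hq_le
    nlinarith [mul_nonneg hq hw0, mul_le_mul_of_nonneg_left hq2 hq]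
  have hqW := mul_le_half_add_div (a := q) (b := W) hε
  have hqw := mul_le_half_add_div (a := q) (b := w) hε
  have hwW : w * W ≤ (w ^ 2 / ε + W ^ 2 / ε) / 2 := by
    have : w * W ≤ (w ^ 2 + W ^ 2) / 2 := by nlinarith [sq_nonneg (w - W)]
    have : w ^ 2 + W ^ 2 ≤ w ^ 2 / ε + W ^ 2 / ε := by
      rw [← add_div, le_div_iff₀ hε]; nlinarith [add_nonneg (sq_nonneg w) (sq_nonneg W)]
    linarith
  have hW2 : 0 ≤ W ^ 2 / ε := by positivity
  rw [add_div]
  linarith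

lemma sq_norm_le_integral_sq_norm_add {F : Type*} [NormedAddCommGroup F] [InnerProductSpace ℝ F]
    {f : ℝ → F} (hf : ContDiff ℝ 1 f) (h1 : Integrable fun x => ‖f x‖ ^ 2)
    (h2 : Integrable fun x => ‖deriv f x‖ ^ 2) (x : ℝ) :
    ‖f x‖ ^ 2 ≤ (∫ t, ‖f t‖ ^ 2) + ∫ t, ‖deriv f t‖ ^ 2 := by
  set g' : ℝ → ℝ := fun t => 2 * inner ℝ (f t) (deriv f t)
  have hg : ∀ t, HasDerivAt (‖f ·‖ ^ 2) (g' t) t :=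
    fun t => ((hf.differentiable one_ne_zero t).hasDerivAt).norm_sq
  have hg'_le : ∀ t, ‖g' t‖ ≤ ‖f t‖ ^ 2 + ‖deriv f t‖ ^ 2 := fun t => by
    rw [Real.norm_eq_abs, abs_mul, abs_two]
    nlinarith [abs_real_inner_le_norm (f t) (deriv f t), sq_nonneg (‖f t‖ - ‖deriv f t‖)]
  have hg'_int : Integrable g' :=
    (h1.add h2).mono' (continuous_const.mul
      (hf.continuous.inner (hf.continuous_deriv le_rfl))).aestronglyMeasurable
      (ae_of_all _ hg'_le)
  have hlim : Tendsto (‖f ·‖ ^ 2) atBot (𝓝 0) :=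
    tendsto_zero_of_hasDerivAt_of_integrableOn_Iic (a := x) (fun t _ => hg t)
      hg'_int.integrableOn h1.integrableOn
  calc ‖f x‖ ^ 2 = ∫ t in Iic x, g' t := by
        rw [integral_Iic_of_hasDerivAt_of_tendsto' (fun t _ => hg t) hg'_int.integrableOn hlim,
          sub_zero]
    _ ≤ ‖∫ t in Iic x, g' t‖ := Real.le_norm_self _
    _ ≤ ∫ t in Iic x, ‖g' t‖ := norm_integral_le_integral_norm _
    _ ≤ ∫ t, ‖g' t‖ := setIntegral_le_integral hg'_int.norm (ae_of_all _ fun _ => norm_nonneg _)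
    _ ≤ ∫ t, (‖f t‖ ^ 2 + ‖deriv f t‖ ^ 2) := integral_mono hg'_int.norm (h1.add h2) hg'_le
    _ = (∫ t, ‖f t‖ ^ 2) + ∫ t, ‖deriv f t‖ ^ 2 := integral_add h1 h2

lemma integrable_norm_pow_four {F : Type*} [NormedAddCommGroup F] [InnerProductSpace ℝ F]
    {f : ℝ → F} (hf : ContDiff ℝ 1 f)
    (h1 : Integrable fun x => ‖f x‖ ^ 2) (h2 : Integrable fun x => ‖deriv f x‖ ^ 2) :
    Integrable fun x => ‖f x‖ ^ 4 := by
  have hbdd : ∀ x, ‖‖f x‖ ^ 2‖ ≤ (∫ t, ‖f t‖ ^ 2) + ∫ t, ‖deriv f t‖ ^ 2 := fun x => by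
    rw [Real.norm_of_nonneg (sq_nonneg _)]
    exact sq_norm_le_integral_sq_norm_add hf h1 h2 x
  exact (h1.bdd_mul (hf.continuous.norm.pow 2).aestronglyMeasurable (ae_of_all _ hbdd)).congr
    (ae_of_all _ fun x => by simp only [Pi.pow_apply]; ring)

lemma IsPreconnected.forall_pos_or_forall_neg {X : Type*} [TopologicalSpace X] {s : Set X}
    {g : X → ℝ} (hs : IsPreconnected s) (hg : ContinuousOn g s) (hne : ∀ x ∈ s, g x ≠ 0) :
    (∀ x ∈ s, 0 < g x) ∨ ∀ x ∈ s, g x < 0 := by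
  by_contra! h
  obtain ⟨⟨a, ha, hga⟩, b, hb, hgb⟩ := h
  obtain ⟨c, hc, hgc⟩ := hs.intermediate_value ha hb hg ⟨hga, hgb⟩
  exact hne c hc hgc

lemma integrableAtFilter_atTop_sq_of_lt_two_mul_abs_deriv {u u' : ℝ → ℝ}
    (hu : ∀ x, HasDerivAt u (u' x) x) (hu' : Continuous u') (hlim : Tendsto u atTop (𝓝 0))
    (hpos : ∀ x, 0 < u x) (hlt : ∀ᶠ x in atTop, u x < 2 * |u' x|) :
    IntegrableAtFilter (fun x => u x ^ 2) atTop := by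
  obtain ⟨a, ha⟩ := eventually_atTop.1 hlt
  have hne : ∀ x ∈ Ici a, u' x ≠ 0 := fun x hx h0 => by
    have := ha x hx
    rw [h0, abs_zero, mul_zero] at this
    exact (hpos x).not_gt this
  have hsq : ∀ x ∈ Ici a, HasDerivAt (fun x => u x ^ 2) (2 * u x * u' x) x := fun x _ => by
    simpa using (hu x).fun_pow 2
  have hsq_lim : Tendsto (fun x => u x ^ 2) atTop (𝓝 0) := by simpa using hlim.pow 2
  have hint : IntegrableOn (fun x => 2 * u x * u' x) (Ioi a) := by
    rcases isPreconnected_Ici.forall_pos_or_forall_neg hu'.continuousOn hne with h | h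
    · exact integrableOn_Ioi_deriv_of_nonneg' hsq
        (fun x hx => by have := h x (mem_Ici_of_Ioi hx); have := hpos x; positivity) hsq_lim
    · exact integrableOn_Ioi_deriv_of_nonpos' hsq
        (fun x hx => by nlinarith [h x (mem_Ici_of_Ioi hx), hpos x]) hsq_lim
  have hu_cont : Continuous u := continuous_iff_continuousAt.2 fun x => (hu x).continuousAt
  refine ⟨Ioi a, Ioi_mem_atTop a, hint.norm.mono' (hu_cont.pow 2).aestronglyMeasurable ?_⟩
  refine ae_restrict_of_forall_mem measurableSet_Ioi fun x hx => ?_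
  have := ha x (le_of_lt hx)
  have := hpos x
  rw [Real.norm_of_nonneg (sq_nonneg _), norm_mul, norm_mul, Real.norm_two, Real.norm_eq_abs,
    Real.norm_eq_abs, abs_of_pos (hpos x)]
  nlinarith

namespace IsGroundState

variable {Q : ℝ → ℝ}

theorem hasDerivAt (hQ : IsGroundState Q) (x : ℝ) : HasDerivAt Q (deriv Q x) x :=
  (hQ.smooth.differentiable (by norm_num) x).hasDerivAt

theorem contDiff_deriv (hQ : IsGroundState Q) : ContDiff ℝ 1 (deriv Q) :=
  hQ.smooth.deriv'

theorem deriv_sq (hQ : IsGroundState Q) (x : ℝ) : deriv Q x ^ 2 = Q x ^ 2 - Q x ^ 6 / 16 := by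
  set E : ℝ → ℝ := fun x => deriv Q x ^ 2 - Q x ^ 2 + Q x ^ 6 / 16
  have hE' : ∀ x, HasDerivAt E 0 x := fun x => by
    have hQ'' : deriv (deriv Q) x = Q x - 3 / 16 * Q x ^ 5 := by linarith [hQ.eqn x]
    have hQ' := hQ.hasDerivAt x
    refine ((((hQ.contDiff_deriv.differentiable one_ne_zero x).hasDerivAt.fun_pow 2).sub
      (hQ'.fun_pow 2)).add ((hQ'.fun_pow 6).div_const 16)).congr_deriv ?_
    rw [hQ'']
    push_cast
    ring
  have hconst : ∀ x, E x = E 0 := fun x =>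
    is_const_of_deriv_eq_zero (fun y => (hE' y).differentiableAt) (fun y => (hE' y).deriv) x 0
  have hlim : Tendsto E (cocompact ℝ) (𝓝 0) := by
    simpa using ((hQ.decay_deriv.pow 2).sub (hQ.decay.pow 2)).add ((hQ.decay.pow 6).div_const 16)
  have hE0 : E 0 = 0 :=
    tendsto_nhds_unique (tendsto_const_nhds.congr fun x => (hconst x).symm) hlim
  have := hconst x
  simp only [E] at this hE0
  linarith

theorem le_two (hQ : IsGroundState Q) (x : ℝ) : Q x ≤ 2 := by
  have h := hQ.deriv_sq x
  have hQ2 := pow_pos (hQ.pos x) 2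
  have h4 : Q x ^ 4 ≤ 2 ^ 4 := by nlinarith [sq_nonneg (deriv Q x)]
  exact le_of_pow_le_pow_left₀ (by norm_num) (by norm_num) h4

theorem abs_deriv_le (hQ : IsGroundState Q) (x : ℝ) : |deriv Q x| ≤ Q x :=
  abs_le_of_sq_le_sq (by nlinarith [hQ.deriv_sq x, pow_pos (hQ.pos x) 6]) (hQ.pos x).le

theorem lt_two_mul_abs_deriv (hQ : IsGroundState Q) {x : ℝ} (hx : Q x ≤ 1) :
    Q x < 2 * |deriv Q x| := by
  have h := hQ.deriv_sq x
  have hpos := hQ.pos x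
  have h4 : Q x ^ 4 ≤ 1 := pow_le_one₀ hpos.le hx
  refine lt_of_pow_lt_pow_left₀ 2 (by positivity) ?_
  rw [mul_pow, sq_abs, h]
  nlinarith [pow_pos hpos 2]

theorem integrable_sq (hQ : IsGroundState Q) : Integrable fun x => Q x ^ 2 := by
  have hQ'c := hQ.contDiff_deriv.continuous
  have hbot : Tendsto Q atBot (𝓝 0) := hQ.decay.mono_left atBot_le_cocompact
  have htop : Tendsto Q atTop (𝓝 0) := hQ.decay.mono_left atTop_le_cocompact
  have hrefl : IntegrableAtFilter (fun x => Q (-x) ^ 2) atTop := by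
    refine integrableAtFilter_atTop_sq_of_lt_two_mul_abs_deriv (u' := fun x => -deriv Q (-x))
      (fun x => ((hQ.hasDerivAt (-x)).comp x (hasDerivAt_neg x)).congr_deriv (mul_neg_one _))
      (hQ'c.comp continuous_neg).neg (hbot.comp tendsto_neg_atTop_atBot) (fun x => hQ.pos _) ?_
    filter_upwards [(hbot.comp tendsto_neg_atTop_atBot).eventually_le_const one_pos] with x hx
    simpa using hQ.lt_two_mul_abs_deriv hx
  refine integrable_iff_integrableAtFilter_atBot_atTop.2
    ⟨⟨?_, ?_⟩, (hQ.smooth.continuous.pow 2).locallyIntegrable⟩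
  · obtain ⟨s, hs, hint⟩ := hrefl
    refine ⟨Neg.neg ⁻¹' s, tendsto_neg_atBot_atTop hs, ?_⟩
    refine (MeasurePreserving.integrableOn_comp_preimage (Measure.measurePreserving_neg _)
      (Homeomorph.neg ℝ).measurableEmbedding).1 ?_
    simpa [Function.comp_def] using hint
  · refine integrableAtFilter_atTop_sq_of_lt_two_mul_abs_deriv hQ.hasDerivAt hQ'c htop hQ.pos ?_
    filter_upwards [htop.eventually_le_const one_pos] with x hx
    exact hQ.lt_two_mul_abs_deriv hx

end IsGroundState

lemma MeasureTheory.Integrable.pow_four_of_abs_le {α : Type*} [MeasurableSpace α] {μ : Measure α}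
    {q : α → ℝ} {C : ℝ} (hq : Integrable (fun x => q x ^ 2) μ) (hm : AEStronglyMeasurable q μ)
    (hC : ∀ x, |q x| ≤ C) : Integrable (fun x => q x ^ 4) μ := by
  have hle : ∀ x, ‖q x ^ 2‖ ≤ C ^ 2 := fun x => by
    rw [Real.norm_of_nonneg (sq_nonneg _), ← sq_abs]
    exact pow_le_pow_left₀ (abs_nonneg _) (hC x) 2
  exact (hq.bdd_mul (f := fun x => q x ^ 2) (hm.pow 2) (ae_of_all _ hle)).congr
    (ae_of_all _ fun x => by ring)

lemma sub_le_momentum_of_sq_dist_le {q q' : ℝ → ℝ} (hq : ∀ x, 0 ≤ q x) (hq2 : ∀ x, q x ≤ 2)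
    (hq' : ∀ x, |q' x| ≤ q x) (hqc : Continuous q) (hq'c : Continuous q')
    (hq_int : Integrable fun x => q x ^ 2) {c : ℂ} (hc : ‖c‖ = 1) {ε : ℝ} (hε : 0 < ε)
    (hε1 : ε ≤ 1) {f : ℝ → ℂ} (hf : ContDiff ℝ 1 f) (h1 : Integrable fun x => ‖f x‖ ^ 2)
    (h2 : Integrable fun x => ‖deriv f x‖ ^ 2)
    (hclose : (∫ x, ‖f x - c * q x‖ ^ 2) + (∫ x, ‖deriv f x - c * q' x‖ ^ 2) ≤ ε ^ 2) :
    (∫ x, q x ^ 4) / 4 - 3 * ε * ((∫ x, q x ^ 2) + 1)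
      ≤ (∫ x, conj (f x) * deriv f x).im + (1 / 4) * ∫ x, ‖f x‖ ^ 4 := by
  have hfL2 : MemLp f 2 :=
    (memLp_two_iff_integrable_sq_norm hf.continuous.aestronglyMeasurable).2 h1
  have hf'L2 : MemLp (deriv f) 2 :=
    (memLp_two_iff_integrable_sq_norm (hf.continuous_deriv le_rfl).aestronglyMeasurable).2 h2
  have hqL2 : MemLp q 2 :=
    (memLp_two_iff_integrable_sq_norm hqc.aestronglyMeasurable).2 (by simpa using hq_int)
  have hq'L2 : MemLp q' 2 := hqL2.of_le hq'c.aestronglyMeasurable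
    (ae_of_all _ fun x => by simpa [abs_of_nonneg (hq x)] using hq' x)
  have hw : Integrable fun x => ‖f x - c * q x‖ ^ 2 :=
    (hfL2.sub (hqL2.ofReal.const_mul c)).norm.integrable_sq
  have hW : Integrable fun x => ‖deriv f x - c * q' x‖ ^ 2 :=
    (hf'L2.sub (hq'L2.ofReal.const_mul c)).norm.integrable_sq
  have hq4 := hq_int.pow_four_of_abs_le hqc.aestronglyMeasurable
    (fun x => (abs_of_nonneg (hq x)).trans_le (hq2 x))
  have hmom : Integrable fun x => conj (f x) * deriv f x := hfL2.star.integrable_mul hf'L2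
  have hmom_im : Integrable fun x => (conj (f x) * deriv f x).im := hmom.im
  have hf4 := integrable_norm_pow_four hf h1 h2
  have hdist : ((∫ x, ‖f x - c * q x‖ ^ 2) + ∫ x, ‖deriv f x - c * q' x‖ ^ 2) / ε ≤ ε := by
    rw [div_le_iff₀ hε]; nlinarith
  calc (∫ x, q x ^ 4) / 4 - 3 * ε * ((∫ x, q x ^ 2) + 1)
      ≤ (∫ x, q x ^ 4) / 4 - 3 * (ε * (∫ x, q x ^ 2)
          + ((∫ x, ‖f x - c * q x‖ ^ 2) + ∫ x, ‖deriv f x - c * q' x‖ ^ 2) / ε) := by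
        nlinarith
    _ = ∫ x, (q x ^ 4 / 4
          - 3 * (ε * q x ^ 2 + (‖f x - c * q x‖ ^ 2 + ‖deriv f x - c * q' x‖ ^ 2) / ε)) := by
        rw [integral_sub, integral_div, integral_const_mul, integral_add, integral_const_mul,
          integral_div, integral_add hw hW]
        · exact hq_int.const_mul ε
        · exact (hw.add hW).div_const ε
        · exact hq4.div_const 4
        · exact ((hq_int.const_mul ε).add ((hw.add hW).div_const ε)).const_mul 3
    _ ≤ ∫ x, ((conj (f x) * deriv f x).im + ‖f x‖ ^ 4 / 4) :=
        integral_mono ((hq4.div_const 4).sub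
          (((hq_int.const_mul ε).add ((hw.add hW).div_const ε)).const_mul 3))
          (hmom_im.add (hf4.div_const 4)) fun x =>
          sub_le_im_conj_mul_add_norm_pow_four hc (hq x) (hq2 x) (hq' x) hε hε1 _ _
    _ = (∫ x, conj (f x) * deriv f x).im + (1 / 4) * ∫ x, ‖f x‖ ^ 4 := by
        have him : ∫ x, (conj (f x) * deriv f x).im = (∫ x, conj (f x) * deriv f x).im :=
          integral_im hmom
        rw [integral_add hmom_im (hf4.div_const 4), integral_div, him]
        ring

/-- Functions `H¹`-close to the orbit of the ground state have momentum
at least `(1/8)∫Q⁴`. -/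
theorem momentum_lower_bound_near_groundState (Q : ℝ → ℝ) (hQ : IsGroundState Q) :
    ∃ ε₀ : ℝ, 0 < ε₀ ∧
      ∀ f : ℝ → ℂ, ContDiff ℝ 1 f →
        Integrable (fun x : ℝ => ‖f x‖ ^ 2) →
        Integrable (fun x : ℝ => ‖deriv f x‖ ^ 2) →
        ∀ γ y : ℝ,
          (∫ x : ℝ, ‖f x - Complex.exp (-Complex.I * (γ : ℂ)) * (Q (x - y) : ℂ)‖ ^ 2)
            + (∫ x : ℝ, ‖deriv f x
                - Complex.exp (-Complex.I * (γ : ℂ)) * (Complex.ofReal (deriv Q (x - y)))‖ ^ 2)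
            ≤ ε₀ ^ 2 →
          (1/8) * (∫ x : ℝ, Q x ^ 4)
            ≤ (∫ x : ℝ, conj (f x) * deriv f x).im
              + (1/4) * ∫ x : ℝ, ‖f x‖ ^ 4 := by
  have hQc := hQ.smooth.continuous
  have hQ4 := hQ.integrable_sq.pow_four_of_abs_le hQc.aestronglyMeasurable
    fun x => (abs_of_pos (hQ.pos x)).trans_le (hQ.le_two x)
  have hA : 0 ≤ ∫ x, Q x ^ 2 := integral_nonneg fun x => sq_nonneg _
  have hB : 0 < ∫ x, Q x ^ 4 := by
    rw [integral_pos_iff_support_of_nonneg (fun x => by positivity) hQ4]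
    simp [Function.support, fun x => (pow_pos (hQ.pos x) 4).ne']
  set ε₀ := min 1 ((∫ x, Q x ^ 4) / (24 * ((∫ x, Q x ^ 2) + 1)))
  have hε₀ : 0 < ε₀ := by positivity
  refine ⟨ε₀, hε₀, fun f hf h1 h2 γ y hclose => ?_⟩
  have key := sub_le_momentum_of_sq_dist_le (fun x => (hQ.pos (x - y)).le)
    (fun x => hQ.le_two (x - y)) (fun x => hQ.abs_deriv_le (x - y))
    (hQc.comp (continuous_sub_right y)) (hQ.contDiff_deriv.continuous.comp (continuous_sub_right y))
    (hQ.integrable_sq.comp_sub_right y) (by simp [Complex.norm_exp]) hε₀ (min_le_left _ _)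
    hf h1 h2 hclose
  rw [integral_sub_right_eq_self (fun x => Q x ^ 4), integral_sub_right_eq_self (fun x => Q x ^ 2)]
    at key
  have hsmall : 3 * ε₀ * ((∫ x, Q x ^ 2) + 1) ≤ (∫ x, Q x ^ 4) / 8 := by
    have := min_le_right 1 ((∫ x, Q x ^ 4) / (24 * ((∫ x, Q x ^ 2) + 1)))
    rw [le_div_iff₀ (by positivity)] at this
    linarith
  linarith
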